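/- arXiv:2207.04408 — 4 statements merged into one kernel-verified Lean document; each statement's English description precedes it below -/
import Mathlib

section
/- Fix d ≥ 4, 2 ≤ m ≤ 2d−1, and integers n₂,…,n_m all ≥ 2. Let p(X) = (X² − (d−1)X − 1)·∏_{i=2}^{m}(X^{n_i}+1) + X·∑_{i=2}^{m} ∏_{j≠i, 2≤j≤m}(X^{n_j}+1). Then p(2) < 0; consequently, since p is monic, p has a real root strictly larger than 2. -/
/-! At `x = 2` every factor `2^{n_i} + 1` is at least `5`, so each product in the sum is at most a
fifth of `P = ∏ (2^{n_i} + 1)`, and `p(2) ≤ (5 - 2d + 2(m - 1)/5)·P < 0`. At `x = d` the quadratic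
factor `d² - (d - 1)d - 1 = d - 1` is positive, so `p(d) > 0` and the intermediate value
theorem gives a root in `(2, d)`. -/

open Finset

/-- The auxiliary polynomial `p_{d,n̲}` of the paper, evaluated at a real `x`:
`p(x) = (x² − (d−1)x − 1)·∏_{i=2}^{m}(x^{n_i}+1) + x·∑_{i=2}^{m}∏_{j≠i}(x^{n_j}+1)`. -/
def pPoly (d m : ℕ) (n : ℕ → ℕ) (x : ℝ) : ℝ :=
  (x^2 - ((d : ℝ) - 1) * x - 1) * ∏ i ∈ Finset.Icc 2 m, (x^(n i) + 1)
    + x * ∑ i ∈ Finset.Icc 2 m, ∏ j ∈ (Finset.Icc 2 m).erase i, (x^(n j) + 1)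

theorem Finset.mul_sum_prod_erase_le {ι R : Type*} [DecidableEq ι] [CommSemiring R]
    [PartialOrder R] [IsOrderedRing R] {s : Finset ι} {f : ι → R} {c : R}
    (hf : ∀ i ∈ s, 0 ≤ f i) (hc : ∀ i ∈ s, c ≤ f i) :
    c * ∑ i ∈ s, ∏ j ∈ s.erase i, f j ≤ #s • ∏ i ∈ s, f i := by
  rw [mul_sum]
  refine sum_le_card_nsmul _ _ _ fun i hi => ?_
  calc c * ∏ j ∈ s.erase i, f j ≤ f i * ∏ j ∈ s.erase i, f j :=
        mul_le_mul_of_nonneg_right (hc i hi) (prod_nonneg fun j hj => hf j (mem_of_mem_erase hj))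
    _ = ∏ j ∈ s, f j := mul_prod_erase s f hi

theorem pPoly_two_neg {d m : ℕ} (hd : 4 ≤ d) (hm : m ≤ 2 * d - 1) {n : ℕ → ℕ}
    (hn : ∀ i ∈ Icc 2 m, 2 ≤ n i) : pPoly d m n 2 < 0 := by
  set P := ∏ i ∈ Icc 2 m, ((2 : ℝ) ^ n i + 1)
  set S := ∑ i ∈ Icc 2 m, ∏ j ∈ (Icc 2 m).erase i, ((2 : ℝ) ^ n j + 1)
  have hP : 0 < P := prod_pos fun i _ => by positivity
  have hS : 5 * S ≤ #(Icc 2 m) • P := by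
    refine mul_sum_prod_erase_le (fun i _ => by positivity) fun i hi => ?_
    calc (5 : ℝ) = 2 ^ 2 + 1 := by norm_num
      _ ≤ 2 ^ n i + 1 := by gcongr; exacts [one_le_two, hn i hi]
  have hcard : (#(Icc 2 m) : ℝ) ≤ 2 * d - 2 := by
    rw [Nat.card_Icc]
    have : m + 1 - 2 + 2 ≤ 2 * d := by omega
    have : ((m + 1 - 2 : ℕ) : ℝ) + 2 ≤ 2 * d := by exact_mod_cast this
    linarith
  have hd' : (4 : ℝ) ≤ d := by exact_mod_cast hd
  rw [nsmul_eq_mul] at hS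
  change (2 ^ 2 - ((d : ℝ) - 1) * 2 - 1) * P + 2 * S < 0
  nlinarith [mul_le_mul_of_nonneg_right hcard hP.le]

theorem pPoly_natCast_pos {d : ℕ} (hd : 2 ≤ d) (m : ℕ) (n : ℕ → ℕ) : 0 < pPoly d m n d := by
  have hd' : (2 : ℝ) ≤ d := by exact_mod_cast hd
  have hP : 0 < ∏ i ∈ Icc 2 m, ((d : ℝ) ^ n i + 1) := prod_pos fun i _ => by positivity
  have hS : 0 ≤ ∑ i ∈ Icc 2 m, ∏ j ∈ (Icc 2 m).erase i, ((d : ℝ) ^ n j + 1) :=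
    sum_nonneg fun i _ => prod_nonneg fun j _ => by positivity
  have hlead : (d : ℝ) ^ 2 - (d - 1) * d - 1 = d - 1 := by ring
  rw [pPoly, hlead]
  nlinarith

theorem continuous_pPoly (d m : ℕ) (n : ℕ → ℕ) : Continuous (pPoly d m n) := by
  unfold pPoly
  fun_prop

theorem stmt1_general (d m : ℕ) (hd : 4 ≤ d) (hm2 : m ≤ 2*d - 1)
    (n : ℕ → ℕ) (hn : ∀ i ∈ Finset.Icc 2 m, 2 ≤ n i) :
    pPoly d m n 2 < 0 ∧ ∃ x : ℝ, 2 < x ∧ pPoly d m n x = 0 := by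
  have hneg := pPoly_two_neg hd hm2 hn
  have hpos := pPoly_natCast_pos (d := d) (by omega) m n
  have h2d : (2 : ℝ) ≤ d := by exact_mod_cast (by omega : 2 ≤ d)
  obtain ⟨x, hx, hroot⟩ :=
    intermediate_value_Ioo h2d (continuous_pPoly d m n).continuousOn ⟨hneg, hpos⟩
  exact ⟨hneg, x, hx.1, hroot⟩

/-- For `d ≥ 4`, `2 ≤ m ≤ 2d−1` and `n₂,…,n_m ≥ 2`, one has `p(2) < 0`, and
consequently `p` has a real root strictly larger than `2`. -/
theorem stmt1 (d m : ℕ) (hd : 4 ≤ d) (hm1 : 2 ≤ m) (hm2 : m ≤ 2*d - 1)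
    (n : ℕ → ℕ) (hn : ∀ i ∈ Finset.Icc 2 m, 2 ≤ n i) :
    pPoly d m n 2 < 0 ∧ ∃ x : ℝ, 2 < x ∧ pPoly d m n x = 0 :=
  stmt1_general d m hd hm2 n hn
end

section
/- Fix d ≥ 4, 2 ≤ m ≤ 2d−1, and n̲ = (n₂,…,n_m) with each n_i ≥ 2. Let λ_{d,n̲} denote the largest real root of p_{d,n̲}. If n̲_k is obtained from n̲ by increasing the entry n_k by 1, then λ_{d,n̲} < λ_{d,n̲_k}. -/
open Finset

def pPolyOn (d : ℕ) (s : Finset ℕ) (n : ℕ → ℕ) (x : ℝ) : ℝ :=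
  (x ^ 2 - ((d : ℝ) - 1) * x - 1) * ∏ i ∈ s, (x ^ n i + 1)
    + x * ∑ i ∈ s, ∏ j ∈ s.erase i, (x ^ n j + 1)

theorem pPoly_eq_pPolyOn (d m : ℕ) (n : ℕ → ℕ) : pPoly d m n = pPolyOn d (Icc 2 m) n := rfl

lemma lt_of_isGreatest_setOf_eq_zero {f : ℝ → ℝ} (hf : Continuous f) {a b l : ℝ}
    (hab : a ≤ b) (ha : f a < 0) (hb : 0 < f b) (hl : IsGreatest {x | f x = 0} l) : a < l := by
  obtain ⟨c, ⟨hac, -⟩, hc⟩ := intermediate_value_Ioo hab hf.continuousOn ⟨ha, hb⟩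
  exact hac.trans_le (hl.2 hc)

namespace pPolyOn

variable {d : ℕ} {s : Finset ℕ} {n : ℕ → ℕ} {k : ℕ} {x : ℝ}

theorem continuous (d : ℕ) (s : Finset ℕ) (n : ℕ → ℕ) : Continuous (pPolyOn d s n) := by
  unfold pPolyOn
  fun_prop

theorem congr {n' : ℕ → ℕ} (h : ∀ i ∈ s, n i = n' i) :
    pPolyOn d s n x = pPolyOn d s n' x := by
  have hprod : ∀ t ⊆ s, ∏ i ∈ t, (x ^ n i + 1) = ∏ i ∈ t, (x ^ n' i + 1) := fun t ht =>
    prod_congr rfl fun i hi => by rw [h i (ht hi)]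
  unfold pPolyOn
  rw [hprod s subset_rfl, sum_congr rfl fun i _ => hprod _ (erase_subset i s)]

theorem eq_of_mem (hk : k ∈ s) :
    pPolyOn d s n x
      = (x ^ n k + 1) * pPolyOn d (s.erase k) n x + x * ∏ i ∈ s.erase k, (x ^ n i + 1) := by
  have hsum : ∑ i ∈ s.erase k, ∏ j ∈ s.erase i, (x ^ n j + 1)
      = (x ^ n k + 1) * ∑ i ∈ s.erase k, ∏ j ∈ (s.erase k).erase i, (x ^ n j + 1) := by
    rw [mul_sum]
    refine sum_congr rfl fun i hi => ?_
    rw [erase_right_comm]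
    exact (mul_prod_erase _ _ (mem_erase.mpr ⟨(ne_of_mem_erase hi).symm, hk⟩)).symm
  unfold pPolyOn
  rw [← mul_prod_erase _ _ hk, ← add_sum_erase _ _ hk, hsum]
  ring

theorem update_succ (hk : k ∈ s) :
    pPolyOn d s (Function.update n k (n k + 1)) x
      = pPolyOn d s n x + x ^ n k * (x - 1) * pPolyOn d (s.erase k) n x := by
  have hagree : ∀ i ∈ s.erase k, Function.update n k (n k + 1) i = n i := fun i hi =>
    Function.update_of_ne (ne_of_mem_erase hi) _ _
  rw [eq_of_mem hk, eq_of_mem (n := n) hk, congr hagree,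
    prod_congr rfl fun i hi => by rw [hagree i hi], Function.update_self]
  ring

theorem erase_neg_of_eq_zero (hk : k ∈ s) (hx : 0 < x) (h : pPolyOn d s n x = 0) :
    pPolyOn d (s.erase k) n x < 0 := by
  have hQ : 0 < x * ∏ i ∈ s.erase k, (x ^ n i + 1) :=
    mul_pos hx (prod_pos fun i _ => by positivity)
  have hxk : 0 < x ^ n k + 1 := by positivity
  rw [eq_of_mem hk] at h
  nlinarith

theorem update_succ_neg_of_eq_zero (hk : k ∈ s) (hx : 1 < x) (h : pPolyOn d s n x = 0) :
    pPolyOn d s (Function.update n k (n k + 1)) x < 0 := by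
  have hC := erase_neg_of_eq_zero hk (by linarith) h
  have hfac : 0 < x ^ n k * (x - 1) := mul_pos (by positivity) (by linarith)
  rw [update_succ hk, h, zero_add]
  exact mul_neg_of_pos_of_neg hfac hC

theorem pos_of_le (hd : 2 ≤ d) (hx : (d : ℝ) ≤ x) : 0 < pPolyOn d s n x := by
  have hd' : (2 : ℝ) ≤ d := by exact_mod_cast hd
  have hx0 : 0 < x := by linarith
  have hq : 0 < x ^ 2 - ((d : ℝ) - 1) * x - 1 := by nlinarith
  have hprod : 0 < ∏ i ∈ s, (x ^ n i + 1) := prod_pos fun i _ => by positivity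
  have hsum : 0 ≤ ∑ i ∈ s, ∏ j ∈ s.erase i, (x ^ n j + 1) :=
    sum_nonneg fun i _ => prod_nonneg fun j _ => by positivity
  unfold pPolyOn
  nlinarith [mul_pos hq hprod, mul_nonneg hx0.le hsum]

theorem two_neg (hn : ∀ i ∈ s, 2 ≤ n i) (hcard : 2 * (s.card : ℝ) < 5 * (2 * d - 5)) :
    pPolyOn d s n 2 < 0 := by
  set P := ∏ i ∈ s, ((2 : ℝ) ^ n i + 1)
  have hP : 0 < P := prod_pos fun i _ => by positivity
  have hterm : ∀ i ∈ s, ∏ j ∈ s.erase i, ((2 : ℝ) ^ n j + 1) ≤ P / 5 := by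
    intro i hi
    have h5 : (5 : ℝ) ≤ 2 ^ n i + 1 := by
      linarith [pow_le_pow_right₀ one_le_two (hn i hi) (M₀ := ℝ)]
    have hrest : 0 < ∏ j ∈ s.erase i, ((2 : ℝ) ^ n j + 1) := prod_pos fun j _ => by positivity
    have := mul_prod_erase s (fun j => (2 : ℝ) ^ n j + 1) hi
    nlinarith
  have hsum : ∑ i ∈ s, ∏ j ∈ s.erase i, ((2 : ℝ) ^ n j + 1) ≤ s.card * (P / 5) := by
    simpa only [nsmul_eq_mul] using sum_le_card_nsmul s _ _ hterm
  unfold pPolyOn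
  nlinarith

end pPolyOn

theorem stmt3_general (d m k : ℕ) (hd : 4 ≤ d) (hm2 : m ≤ 2*d - 1)
    (hk1 : 2 ≤ k) (hk2 : k ≤ m)
    (n : ℕ → ℕ) (hn : ∀ i ∈ Finset.Icc 2 m, 2 ≤ n i)
    (lam lam' : ℝ)
    (hlam : IsGreatest {x : ℝ | pPoly d m n x = 0} lam)
    (hlam' : IsGreatest {x : ℝ | pPoly d m (Function.update n k (n k + 1)) x = 0} lam') :
    lam < lam' := by
  rw [pPoly_eq_pPolyOn] at hlam hlam'
  have hk : k ∈ Icc 2 m := mem_Icc.mpr ⟨hk1, hk2⟩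
  have hd2 : 2 ≤ d := by omega
  have hd2' : (2 : ℝ) ≤ d := by exact_mod_cast hd2
  have hcard : 2 * ((Icc 2 m).card : ℝ) < 5 * (2 * d - 5) := by
    have : (Icc 2 m).card + 2 ≤ 2 * d := by simp only [Nat.card_Icc]; omega
    have : ((Icc 2 m).card : ℝ) + 2 ≤ 2 * d := by exact_mod_cast this
    have : (4 : ℝ) ≤ d := by exact_mod_cast hd
    linarith
  have hlam2 : 2 < lam :=
    lt_of_isGreatest_setOf_eq_zero (pPolyOn.continuous _ _ _) hd2' (pPolyOn.two_neg hn hcard)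
      (pPolyOn.pos_of_le hd2 le_rfl) hlam
  have hlam_d : lam < d := not_le.mp fun h => (pPolyOn.pos_of_le hd2 h).ne' hlam.1
  exact lt_of_isGreatest_setOf_eq_zero (pPolyOn.continuous _ _ _) hlam_d.le
    (pPolyOn.update_succ_neg_of_eq_zero hk (by linarith) hlam.1) (pPolyOn.pos_of_le hd2 le_rfl)
    hlam'

/-- If `λ_{d,n̲}` is the largest real root of `p_{d,n̲}` and `n̲_k` is obtained from
`n̲` by increasing the entry `n_k` by one, then `λ_{d,n̲} < λ_{d,n̲_k}`. -/
theorem stmt3 (d m k : ℕ) (hd : 4 ≤ d) (hm1 : 2 ≤ m) (hm2 : m ≤ 2*d - 1)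
    (hk1 : 2 ≤ k) (hk2 : k ≤ m)
    (n : ℕ → ℕ) (hn : ∀ i ∈ Finset.Icc 2 m, 2 ≤ n i)
    (lam lam' : ℝ)
    (hlam : IsGreatest {x : ℝ | pPoly d m n x = 0} lam)
    (hlam' : IsGreatest {x : ℝ | pPoly d m (Function.update n k (n k + 1)) x = 0} lam') :
    lam < lam' :=
  stmt3_general d m k hd hm2 hk1 hk2 n hn lam lam' hlam hlam'
end

section
/- Fix d ≥ 4 and n̲ = (n₂,…,n_{2d−1}) with all n_i ≥ 2, and let λ > 2 be a root of p_{d,n̲}. Then the vector (λ+1, 1, λ, λ/(λ^{n₂}+1), λ²/(λ^{n₂}+1), …, λ^{n₂}/(λ^{n₂}+1), …, λ^{n_{2d−1}}/(λ^{n_{2d−1}}+1))ᵀ satisfies the three key eigenvector equations: d(λ+1) − (d−1) − ∑_{i=2}^{2d−1} λ/(λ^{n_i}+1) = λ(λ+1); (d−1)(λ+1) − (d−2) − ∑_{i=2}^{2d−1} λ/(λ^{n_i}+1) = λ²; and λ+1 − 1 − λ/(λ^{n_i}+1) = λ·λ^{n_i}/(λ^{n_i}+1) for each i. -/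
/-! Dividing `p_{d,n̲}(λ) = 0` by `∏ (λ^{n_i} + 1)` gives
`∑ λ / (λ^{n_i} + 1) = (d - 1) λ + 1 - λ²`, and the first two equations are this identity
rearranged. -/

open Finset

theorem Finset.sum_div_mul_prod {ι K : Type*} [Field K] [DecidableEq ι] (s : Finset ι)
    (a : K) (f : ι → K) (hf : ∀ i ∈ s, f i ≠ 0) :
    (∑ i ∈ s, a / f i) * ∏ i ∈ s, f i = a * ∑ i ∈ s, ∏ j ∈ s.erase i, f j := by
  rw [sum_mul, mul_sum]
  refine sum_congr rfl fun i hi => ?_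
  rw [← mul_prod_erase s f hi, div_mul_eq_mul_div, mul_div_assoc, mul_div_cancel_left₀ _ (hf i hi)]

theorem pPoly_eq_mul_prod (d m : ℕ) (n : ℕ → ℕ) (x : ℝ)
    (hx : ∀ i ∈ Icc 2 m, x ^ n i + 1 ≠ 0) :
    pPoly d m n x = (x ^ 2 - ((d : ℝ) - 1) * x - 1 + ∑ i ∈ Icc 2 m, x / (x ^ n i + 1))
      * ∏ i ∈ Icc 2 m, (x ^ n i + 1) := by
  rw [pPoly, add_mul, sum_div_mul_prod _ _ _ hx]

theorem sum_div_pow_add_one_of_pPoly_eq_zero (d m : ℕ) (n : ℕ → ℕ) {x : ℝ} (hx : 0 < x)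
    (hroot : pPoly d m n x = 0) :
    ∑ i ∈ Icc 2 m, x / (x ^ n i + 1) = ((d : ℝ) - 1) * x + 1 - x ^ 2 := by
  have hpos : ∀ i, 0 < x ^ n i + 1 := fun i => by positivity
  rw [pPoly_eq_mul_prod _ _ _ _ fun i _ => (hpos i).ne'] at hroot
  have := (mul_eq_zero.mp hroot).resolve_right (prod_pos fun i _ => hpos i).ne'
  linarith

theorem stmt11_general (d : ℕ) (n : ℕ → ℕ)
    (lam : ℝ) (hlam : 2 < lam) (hroot : pPoly d (2*d - 1) n lam = 0) :
    ((d : ℝ) * (lam + 1) - ((d : ℝ) - 1)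
        - ∑ i ∈ Finset.Icc 2 (2*d - 1), lam / (lam^(n i) + 1) = lam * (lam + 1)) ∧
    (((d : ℝ) - 1) * (lam + 1) - ((d : ℝ) - 2)
        - ∑ i ∈ Finset.Icc 2 (2*d - 1), lam / (lam^(n i) + 1) = lam^2) ∧
    (∀ i ∈ Finset.Icc 2 (2*d - 1),
      lam + 1 - 1 - lam / (lam^(n i) + 1) = lam * lam^(n i) / (lam^(n i) + 1)) := by
  have hlam0 : 0 < lam := by linarith
  have hsum := sum_div_pow_add_one_of_pPoly_eq_zero d _ n hlam0 hroot
  refine ⟨by rw [hsum]; ring, by rw [hsum]; ring, fun i _ => ?_⟩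
  have : lam ^ n i + 1 ≠ 0 := by positivity
  field_simp
  ring

/-- If `λ > 2` is a root of `p_{d,n̲}` (with `m = 2d−1`), then the explicit vector of
the paper satisfies the three key eigenvector equations. -/
theorem stmt11 (d : ℕ) (hd : 4 ≤ d) (n : ℕ → ℕ)
    (hn : ∀ i ∈ Finset.Icc 2 (2*d - 1), 2 ≤ n i)
    (lam : ℝ) (hlam : 2 < lam) (hroot : pPoly d (2*d - 1) n lam = 0) :
    ((d : ℝ) * (lam + 1) - ((d : ℝ) - 1)
        - ∑ i ∈ Finset.Icc 2 (2*d - 1), lam / (lam^(n i) + 1) = lam * (lam + 1)) ∧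
    (((d : ℝ) - 1) * (lam + 1) - ((d : ℝ) - 2)
        - ∑ i ∈ Finset.Icc 2 (2*d - 1), lam / (lam^(n i) + 1) = lam^2) ∧
    (∀ i ∈ Finset.Icc 2 (2*d - 1),
      lam + 1 - 1 - lam / (lam^(n i) + 1) = lam * lam^(n i) / (lam^(n i) + 1)) :=
  stmt11_general d n lam hlam hroot
end

section
/- Let (Λ_m)_{m≥1} be subsets of ℝ constructed as follows: Λ₁ is a singleton; for each m ≥ 2, Λ_m is a union over the elements x of Λ_{m−1} (together with associated auxiliary points) of strictly increasing sequences contained in pairwise disjoint open intervals, each sequence converging to its corresponding point of Λ_{m−1} from below. Then each Λ_m is well ordered under the order inherited from ℝ and has order type ω^{m−1}, and the closure of Λ_m equals the disjoint union Λ₁ ⊔ ⋯ ⊔ Λ_m. -/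
/-!
If `x < y` are points of `Λ_{m-1}`, the disjointness of `(lo x, x)` and `(lo y, y)` forces
`x ≤ lo y`, so every term of the sequence converging to `x` lies below every term of the sequence
converging to `y`. Hence `(x, k) ↦ seq x k` is an order isomorphism `Λ_{m-1} ×ₗ ℕ ≃o Λ_m`, and the
order type gets multiplied by `ω`. Near a point `z` outside `closure Λ_{m-1}`, the points of `Λ_m`
all come from one sequence whose limit lies beyond that neighbourhood, so only finitely many of
them come close to `z`; thus the only new accumulation points of `Λ_m` are those of `Λ_{m-1}`, and
`Λ_m`, which lies in the intervals `(lo x, x)`, misses `closure Λ_{m-1}`.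
-/

open Set Filter Topology Ordinal

structure IsLeftApproximation (S : Set ℝ) (lo : ℝ → ℝ) (seq : ℝ → ℕ → ℝ) : Prop where
  strictMono : ∀ x ∈ S, StrictMono (seq x)
  mem_Ioo : ∀ x ∈ S, ∀ k, seq x k ∈ Ioo (lo x) x
  tendsto : ∀ x ∈ S, Tendsto (seq x) atTop (𝓝 x)
  pairwiseDisjoint : S.PairwiseDisjoint fun x ↦ Ioo (lo x) x

namespace IsLeftApproximation

variable {S : Set ℝ} {lo : ℝ → ℝ} {seq : ℝ → ℕ → ℝ}

theorem le_lo_of_lt (h : IsLeftApproximation S lo seq) {x y : ℝ} (hx : x ∈ S) (hy : y ∈ S)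
    (hxy : x < y) : x ≤ lo y := by
  by_contra! hlt
  obtain ⟨t, ht, htx⟩ := exists_between
    (max_lt ((h.mem_Ioo x hx 0).1.trans (h.mem_Ioo x hx 0).2) hlt)
  exact disjoint_left.mp (h.pairwiseDisjoint hx hy hxy.ne)
    ⟨(le_max_left _ _).trans_lt ht, htx⟩ ⟨(le_max_right _ _).trans_lt ht, htx.trans hxy⟩

theorem disjoint_Ioo_closure (h : IsLeftApproximation S lo seq) {x : ℝ} (hx : x ∈ S) :
    Disjoint (Ioo (lo x) x) (closure S) := by
  refine Disjoint.closure_right (disjoint_right.mpr fun y hy hyI ↦ ?_) isOpen_Ioo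
  exact hyI.1.not_ge (h.le_lo_of_lt hy hx hyI.2)

theorem disjoint_closure (h : IsLeftApproximation S lo seq) :
    Disjoint (⋃ x ∈ S, range (seq x)) (closure S) := by
  simp only [disjoint_iUnion₂_left]
  exact fun x hx ↦ (h.disjoint_Ioo_closure hx).mono_left (range_subset_iff.mpr (h.mem_Ioo x hx))

theorem eq_of_lo_lt_of_le (h : IsLeftApproximation S lo seq) {x y b : ℝ} (hx : x ∈ S)
    (hy : y ∈ S) (hxb : lo x < b) (hyb : lo y < b) (hbx : b ≤ x) (hby : b ≤ y) : x = y := by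
  by_contra hne
  rcases lt_or_gt_of_ne hne with hlt | hlt
  · linarith [h.le_lo_of_lt hx hy hlt]
  · linarith [h.le_lo_of_lt hy hx hlt]

theorem subset_closure_biUnion_range (h : IsLeftApproximation S lo seq) :
    S ⊆ closure (⋃ x ∈ S, range (seq x)) := fun x hx ↦
  mem_closure_of_tendsto (h.tendsto x hx) (.of_forall fun k ↦ mem_biUnion hx ⟨k, rfl⟩)

theorem closure_biUnion_range (h : IsLeftApproximation S lo seq) :
    closure (⋃ x ∈ S, range (seq x)) = (⋃ x ∈ S, range (seq x)) ∪ closure S := by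
  set T := ⋃ x ∈ S, range (seq x)
  refine Subset.antisymm (fun z hz ↦ ?_)
    (union_subset subset_closure (closure_minimal h.subset_closure_biUnion_range isClosed_closure))
  by_cases hzS : z ∈ closure S
  · exact Or.inr hzS
  left
  obtain ⟨a, b, hzab, hab⟩ :=
    mem_nhds_iff_exists_Ioo_subset.mp (isClosed_closure.isOpen_compl.mem_nhds hzS)
  obtain ⟨c, hzc, hcb⟩ := exists_between hzab.2
  have hz : z ∈ closure (Ioo a c ∩ T) := isOpen_Ioo.inter_closure ⟨⟨hzab.1, hzc⟩, hz⟩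
  have hfar : ∀ y ∈ S, ∀ k, seq y k ∈ Ioo a c → lo y < c ∧ b ≤ y := fun y hy k hk ↦
    ⟨(h.mem_Ioo y hy k).1.trans hk.2, not_lt.mp fun hyb ↦
      hab ⟨hk.1.trans (h.mem_Ioo y hy k).2, hyb⟩ (subset_closure hy)⟩
  obtain ⟨_, hp, hpT⟩ := closure_nonempty_iff.mp ⟨z, hz⟩
  obtain ⟨x, hx, k₀, rfl⟩ := mem_iUnion₂.mp hpT
  have hsub : Ioo a c ∩ T ⊆ seq x '' {k | seq x k < c} := by
    rintro _ ⟨hq, hqT⟩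
    obtain ⟨y, hy, k, rfl⟩ := mem_iUnion₂.mp hqT
    obtain rfl := h.eq_of_lo_lt_of_le hy hx ((hfar y hy k hq).1.trans hcb)
      ((hfar x hx k₀ hp).1.trans hcb) (hfar y hy k hq).2 (hfar x hx k₀ hp).2
    exact ⟨k, hq.2, rfl⟩
  have hfin : {k | seq x k < c}.Finite := by
    have := (h.tendsto x hx).eventually (eventually_ge_nhds (hcb.trans_le (hfar x hx k₀ hp).2))
    rw [← Nat.cofinite_eq_atTop, eventually_cofinite] at this
    simpa using this
  obtain ⟨k, -, rfl⟩ := (hfin.image _).isClosed.closure_subset (closure_mono hsub hz)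
  exact mem_biUnion hx ⟨k, rfl⟩

variable (S seq) in
def seqLex (p : S ×ₗ ℕ) : ↥(⋃ x ∈ S, range (seq x)) :=
  ⟨seq (ofLex p).1 (ofLex p).2, mem_biUnion (ofLex p).1.2 ⟨_, rfl⟩⟩

theorem strictMono_seqLex (h : IsLeftApproximation S lo seq) : StrictMono (seqLex S seq) := by
  rintro ⟨⟨x, hx⟩, k⟩ ⟨⟨y, hy⟩, l⟩ hlt
  rcases Prod.Lex.lt_iff.mp hlt with hxy | ⟨hxy, hkl⟩
  · show seq x k < seq y l
    calc seq x k < x := (h.mem_Ioo x hx k).2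
      _ ≤ lo y := h.le_lo_of_lt hx hy hxy
      _ < seq y l := (h.mem_Ioo y hy l).1
  · obtain rfl : x = y := congrArg Subtype.val hxy
    exact Subtype.mk_lt_mk.mpr (h.strictMono x hx hkl)

theorem surjective_seqLex : Function.Surjective (seqLex S seq) := by
  rintro ⟨_, hp⟩
  obtain ⟨x, hx, k, rfl⟩ := mem_iUnion₂.mp hp
  exact ⟨toLex (⟨x, hx⟩, k), rfl⟩

noncomputable def orderIso (h : IsLeftApproximation S lo seq) :
    S ×ₗ ℕ ≃o ↥(⋃ x ∈ S, range (seq x)) :=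
  h.strictMono_seqLex.orderIsoOfSurjective _ surjective_seqLex

theorem wellFoundedLT [WellFoundedLT S] (h : IsLeftApproximation S lo seq) :
    WellFoundedLT ↥(⋃ x ∈ S, range (seq x)) :=
  h.orderIso.symm.toOrderEmbedding.wellFoundedLT

theorem type_biUnion_range [WellFoundedLT S] [WellFoundedLT ↥(⋃ x ∈ S, range (seq x))]
    (h : IsLeftApproximation S lo seq) :
    typeLT ↥(⋃ x ∈ S, range (seq x)) = ω * typeLT S := by
  rw [← h.orderIso.ordinalType_congr, ← type_nat_lt]
  rfl

end IsLeftApproximation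

/-- Let `Λ₁ ⊂ ℝ` be a singleton, and for each `m ≥ 2` let `Λ_m` be the union, over
the points `x ∈ Λ_{m−1}` (each with an associated auxiliary left endpoint `lo x`),
of strictly increasing sequences contained in pairwise disjoint open intervals
`(lo x, x)`, each sequence converging to its point `x` from below. Then each `Λ_m`
(`m ≥ 1`) is well ordered under the order of `ℝ` with order type `ω^{m−1}`, and the
closure of `Λ_m` is the disjoint union `Λ₁ ⊔ ⋯ ⊔ Λ_m`. -/
theorem stmt18 (Λ : ℕ → Set ℝ)
    (seq : ℕ → ℝ → ℕ → ℝ) (lo : ℕ → ℝ → ℝ)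
    (h1 : ∃ x₀ : ℝ, Λ 1 = {x₀})
    (hstep : ∀ m : ℕ, 2 ≤ m →
      (∀ x ∈ Λ (m - 1),
        lo m x < x ∧
        StrictMono (seq m x) ∧
        (∀ k : ℕ, seq m x k ∈ Set.Ioo (lo m x) x) ∧
        Filter.Tendsto (seq m x) Filter.atTop (nhds x)) ∧
      (∀ x ∈ Λ (m - 1), ∀ y ∈ Λ (m - 1), x ≠ y →
        Disjoint (Set.Ioo (lo m x) x) (Set.Ioo (lo m y) y)) ∧
      Λ m = ⋃ x ∈ Λ (m - 1), Set.range (seq m x)) :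
    ∀ m : ℕ, 1 ≤ m →
      (∃ h : IsWellOrder (↥(Λ m)) (· < ·),
        @Ordinal.type (↥(Λ m)) (· < ·) h = Ordinal.omega0 ^ (m - 1 : ℕ)) ∧
      closure (Λ m) = ⋃ i ∈ Set.Icc 1 m, Λ i ∧
      (Set.Icc 1 m : Set ℕ).PairwiseDisjoint Λ := by
  obtain ⟨x₀, hx₀⟩ := h1
  intro m hm
  induction m, hm using Nat.le_induction with
  | base =>
    refine ⟨?_, by simp [hx₀], by simp⟩
    rw [hx₀]
    exact ⟨inferInstance, type_eq_one_of_unique _⟩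
  | succ m hm ih =>
    obtain ⟨⟨_, htype⟩, hclos, hdisj⟩ := ih
    obtain ⟨hpt, hsep, hΛ⟩ := hstep (m + 1) (by omega)
    rw [Nat.add_sub_cancel] at hpt hsep hΛ
    have h : IsLeftApproximation (Λ m) (lo (m + 1)) (seq (m + 1)) :=
      ⟨fun x hx ↦ (hpt x hx).2.1, fun x hx ↦ (hpt x hx).2.2.1, fun x hx ↦ (hpt x hx).2.2.2, hsep⟩
    have hIcc : Icc 1 (m + 1) = insert (m + 1) (Icc 1 m) := by
      ext i; simp only [mem_Icc, mem_insert_iff]; omega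
    rw [hIcc, biUnion_insert, hΛ]
    have := h.wellFoundedLT
    refine ⟨⟨inferInstance, ?_⟩, ?_, ?_⟩
    · rw [h.type_biUnion_range, htype, ← pow_succ']
      congr 1
      omega
    · rw [h.closure_biUnion_range, hclos]
    · refine hdisj.insert fun j hj _ ↦ ?_
      rw [hΛ]
      exact h.disjoint_closure.mono_right (hclos ▸ subset_biUnion_of_mem hj)
end
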